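/- arXiv:2505.07129 — 3 statements merged into one kernel-verified Lean document; each statement's English description precedes it below -/
import Mathlib

section
/- Let μ be a finite positive Borel measure on ℝ, α ∈ (0,1), and let T = {E ∈ ℝ : limsup_{ε→0} μ(E−ε,E+ε)/ε^α = ∞}. Then the restriction of μ to the complement of T is α-Hausdorff continuous: for every Borel set A ⊆ ℝ with α-dimensional Hausdorff measure zero, μ(A \ T) = 0. -/
/-!
Mass distribution principle: if every ball of radius `ε < δ` centred in `E` has `μ`-mass at most
`C ε ^ α`, then every small set `s` satisfies `μ (s ∩ E) ≤ C (diam s) ^ α`, so `μ` restricted to `E`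
is dominated by `C • μH[α]` and vanishes on `μH[α]`-null subsets of `E`. Off `T` the ratio
`μ (x - ε, x + ε) / ε ^ α` stays bounded for small `ε`, so the complement of `T` is a countable
union of such sets `E`.
-/

open MeasureTheory Filter Metric Set
open scoped ENNReal Topology

namespace MeasureTheory.Measure

variable {X : Type*} [MeasurableSpace X]

def ballMassBoundedSet [PseudoMetricSpace X] (μ : Measure X) (d : ℝ) (C : ℝ≥0∞) (δ : ℝ) :
    Set X :=
  {x | ∀ ε ∈ Ioo 0 δ, μ (ball x ε) ≤ C * ENNReal.ofReal ε ^ d}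

theorem measure_le_mul_hausdorffMeasure_of_forall_ediam_le [EMetricSpace X] [BorelSpace X]
    (μ : Measure X) {E : Set X} {d : ℝ} {C r : ℝ≥0∞} (hC₀ : C ≠ 0) (hC : C ≠ ⊤) (hr : 0 < r)
    (h : ∀ s, ediam s ≤ r → μ (s ∩ E) ≤ C * ediam s ^ d) :
    μ E ≤ C * μH[d] E := by
  have hle : C⁻¹ • μ.restrict E ≤ μH[d] := by
    refine le_hausdorffMeasure d _ r hr fun s hs => ?_
    rw [smul_apply, smul_eq_mul, ENNReal.inv_mul_le_iff hC₀ hC]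
    -- pass to the closure, which is measurable and has the same diameter
    calc μ.restrict E s ≤ μ.restrict E (closure s) := measure_mono subset_closure
      _ = μ (closure s ∩ E) := restrict_apply isClosed_closure.measurableSet
      _ ≤ C * ediam (closure s) ^ d := h _ (by rwa [ediam_closure])
      _ = C * ediam s ^ d := by rw [ediam_closure]
  simpa only [smul_apply, restrict_apply_self, smul_eq_mul, ENNReal.inv_mul_le_iff hC₀ hC]
    using hle E

theorem measure_inter_ballMassBoundedSet_le [PseudoMetricSpace X] (μ : Measure X) {d δ : ℝ}
    {C : ℝ≥0∞} (hC : C ≠ ⊤) {s : Set X} (hs : ediam s < ENNReal.ofReal δ) :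
    μ (s ∩ ballMassBoundedSet μ d C δ) ≤ C * ediam s ^ d := by
  rcases (s ∩ ballMassBoundedSet μ d C δ).eq_empty_or_nonempty with hempty | ⟨x, hxs, hx⟩
  · simp [hempty]
  have hfin : ediam s ≠ ⊤ := hs.ne_top
  have hδ : diam s < δ := ENNReal.toReal_lt_of_lt_ofReal hs
  have hbound : ∀ ε ∈ Ioo (diam s) δ,
      μ (s ∩ ballMassBoundedSet μ d C δ) ≤ C * ENNReal.ofReal ε ^ d := by
    intro ε hε
    have hsub : s ∩ ballMassBoundedSet μ d C δ ⊆ ball x ε := fun y hy =>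
      mem_ball.2 ((dist_le_diam_of_mem' hfin hy.1 hxs).trans_lt hε.1)
    exact (measure_mono hsub).trans (hx ε ⟨diam_nonneg.trans_lt hε.1, hε.2⟩)
  have hlim : Tendsto (fun ε => C * ENNReal.ofReal ε ^ d) (𝓝[>] (diam s))
      (𝓝 (C * ENNReal.ofReal (diam s) ^ d)) :=
    ENNReal.Tendsto.const_mul
      ((ENNReal.continuous_rpow_const.comp ENNReal.continuous_ofReal).tendsto _
        |>.mono_left nhdsWithin_le_nhds) (Or.inr hC)
  have hle := ge_of_tendsto hlim (eventually_of_mem (Ioo_mem_nhdsGT hδ) hbound)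
  rwa [diam, ENNReal.ofReal_toReal hfin] at hle

theorem measure_eq_zero_of_subset_ballMassBoundedSet [MetricSpace X] [BorelSpace X]
    (μ : Measure X) {E : Set X} {d δ : ℝ} {C : ℝ≥0∞} (hC₀ : C ≠ 0) (hC : C ≠ ⊤) (hδ : 0 < δ)
    (hE : E ⊆ ballMassBoundedSet μ d C δ) (hH : μH[d] E = 0) : μ E = 0 := by
  have hmass : μ E ≤ C * μH[d] E := by
    refine measure_le_mul_hausdorffMeasure_of_forall_ediam_le μ hC₀ hC
      (ENNReal.ofReal_pos.2 (half_pos hδ)) fun s hs => ?_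
    have hsδ : ediam s < ENNReal.ofReal δ :=
      hs.trans_lt ((ENNReal.ofReal_lt_ofReal_iff hδ).2 (half_lt_self hδ))
    exact (measure_mono (inter_subset_inter_right s hE)).trans
      (measure_inter_ballMassBoundedSet_le μ hC hsδ)
  simpa [hH] using hmass

theorem exists_mem_ballMassBoundedSet_of_limsup_ne_top [PseudoMetricSpace X] (μ : Measure X)
    (d : ℝ) {x : X}
    (hx : limsup (fun ε : ℝ => μ (ball x ε) / ENNReal.ofReal (ε ^ d)) (𝓝[>] 0) ≠ ⊤) :
    ∃ K n : ℕ, x ∈ ballMassBoundedSet μ d (K + 1) (1 / (n + 1)) := by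
  obtain ⟨K, hK⟩ := ENNReal.exists_nat_gt hx
  obtain ⟨δ, hδ, hratio⟩ := (nhdsGT_basis (0 : ℝ)).eventually_iff.1 (eventually_lt_of_limsup_lt hK)
  obtain ⟨n, hn⟩ := exists_nat_one_div_lt hδ
  refine ⟨K, n, fun ε hε => ?_⟩
  have hpos : ENNReal.ofReal (ε ^ d) ≠ 0 :=
    (ENNReal.ofReal_pos.2 (Real.rpow_pos_of_pos hε.1 d)).ne'
  calc μ (ball x ε) ≤ K * ENNReal.ofReal (ε ^ d) :=
        (ENNReal.div_le_iff hpos ENNReal.ofReal_ne_top).1 (hratio ⟨hε.1, hε.2.trans hn⟩).le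
    _ ≤ (K + 1) * ENNReal.ofReal ε ^ d := by
        rw [ENNReal.ofReal_rpow_of_pos hε.1]
        gcongr
        exact le_self_add

end MeasureTheory.Measure

theorem stmt_7_general (μ : Measure ℝ) (α : ℝ)
    (T : Set ℝ)
    (hT : T = {E : ℝ | limsup (fun ε : ℝ =>
        μ (Set.Ioo (E - ε) (E + ε)) / ENNReal.ofReal (ε ^ α))
        (nhdsWithin 0 (Set.Ioi 0)) = ⊤}) :
    ∀ A : Set ℝ, MeasurableSet A →
      (μH[α] A = 0) → μ (A \ T) = 0 := by
  intro A _ hH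
  have hcover : A \ T ⊆ ⋃ (K : ℕ) (n : ℕ),
      A ∩ μ.ballMassBoundedSet α (K + 1) (1 / (n + 1)) := by
    rintro x ⟨hxA, hxT⟩
    have hbounded : limsup (fun ε : ℝ => μ (ball x ε) / ENNReal.ofReal (ε ^ α)) (𝓝[>] 0) ≠ ⊤ := by
      simpa [Real.ball_eq_Ioo, hT] using hxT
    obtain ⟨K, n, hx⟩ := μ.exists_mem_ballMassBoundedSet_of_limsup_ne_top α hbounded
    exact mem_iUnion₂.2 ⟨K, n, hxA, hx⟩
  refine measure_mono_null hcover (measure_iUnion_null fun K => measure_iUnion_null fun n => ?_)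
  exact μ.measure_eq_zero_of_subset_ballMassBoundedSet (by simp) (by simp) (by positivity)
    inter_subset_right (measure_mono_null inter_subset_left hH)

theorem stmt_7 (μ : Measure ℝ) [IsFiniteMeasure μ] (α : ℝ) (hα : α ∈ Set.Ioo (0 : ℝ) 1)
    (T : Set ℝ)
    (hT : T = {E : ℝ | limsup (fun ε : ℝ =>
        μ (Set.Ioo (E - ε) (E + ε)) / ENNReal.ofReal (ε ^ α))
        (nhdsWithin 0 (Set.Ioi 0)) = ⊤}) :
    ∀ A : Set ℝ, MeasurableSet A →
      (μH[α] A = 0) → μ (A \ T) = 0 :=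
  stmt_7_general μ α T hT
end

section
/- Let Δ be the free discrete Laplacian on ℓ²(ℕ), (Δψ)(n) = ψ(n−1)+ψ(n+1) with Dirichlet condition ψ(0)=0, and let V : ℕ → ℝ be a potential supported on a set {n_k : k ∈ ℕ} with n_k strictly increasing and n_k − n_{k−1} → ∞, such that V(n_k) → ∞. Then [−2,2] is contained in the essential spectrum of H = Δ + V. -/
open Filter

/-- The action of the half-line Schrödinger operator `H = Δ + V` on a sequence,
with sites indexed by `n ≥ 1` (Dirichlet boundary condition `ψ 0 = 0` built in). -/
noncomputable def schrodingerAct (V : ℕ → ℝ) (ψ : ℕ → ℝ) (n : ℕ) : ℝ :=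
  (if n ≤ 1 then 0 else ψ (n - 1)) + ψ (n + 1) + V n * ψ n

/-- `E` belongs to the essential spectrum of `H = Δ + V` in the Weyl-sequence sense:
there is an orthonormal sequence `ψ k` in `ℓ²` with `‖(H - E) ψ k‖ → 0`. -/
def IsWeylPoint (V : ℕ → ℝ) (E : ℝ) : Prop :=
  ∃ ψ : ℕ → ℕ → ℝ,
    (∀ k, ψ k 0 = 0) ∧
    (∀ k, Summable fun n => (ψ k n) ^ 2) ∧
    (∀ k, Summable fun n => (schrodingerAct V (ψ k) n - E * ψ k n) ^ 2) ∧
    (∀ k j, (∑' n, ψ k n * ψ j n) = if k = j then (1 : ℝ) else 0) ∧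
    Tendsto (fun k => ∑' n, (schrodingerAct V (ψ k) n - E * ψ k n) ^ 2) atTop (nhds 0)


lemma sin_rec (θ x : ℝ) :
    Real.sin ((x-1)*θ) + Real.sin ((x+1)*θ) = 2 * Real.cos θ * Real.sin (x*θ) := by
  have h1 : (x-1)*θ = x*θ - θ := by ring
  have h2 : (x+1)*θ = x*θ + θ := by ring
  rw [h1, h2, Real.sin_sub, Real.sin_add]; ring

lemma sin_pair (θ x : ℝ) :
    1 - |Real.cos θ| ≤ Real.sin x ^ 2 + Real.sin (x+θ) ^ 2 := by
  have hb := Real.sin_sq_add_cos_sq x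
  have hd := Real.sin_sq_add_cos_sq θ
  rw [Real.sin_add]
  rcases le_or_gt 0 (Real.cos θ) with h | h
  · rw [abs_of_nonneg h]
    nlinarith [sq_nonneg (Real.sin x + (Real.sin x * Real.cos θ + Real.cos x * Real.sin θ)),
      Real.cos_le_one θ, Real.neg_one_le_cos θ]
  · rw [abs_of_neg h]
    nlinarith [sq_nonneg (Real.sin x - (Real.sin x * Real.cos θ + Real.cos x * Real.sin θ)),
      Real.cos_le_one θ, Real.neg_one_le_cos θ]

lemma sum_Icc_pair (u : ℕ → ℝ) (m : ℕ) :
    ∑ x ∈ Finset.Icc 1 (2*m), u x = ∑ i ∈ Finset.range m, (u (2*i+1) + u (2*i+2)) := by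
  induction m with
  | zero => simp
  | succ m ih =>
    have h1 : 2*(m+1) = (2*m+1)+1 := by ring
    rw [h1, Finset.sum_Icc_succ_top (by omega), Finset.sum_Icc_succ_top (by omega), ih,
      Finset.sum_range_succ]
    have : 2*m+1+1 = 2*m+2 := rfl
    rw [this]; ring

lemma schrodingerAct_div (V : ℕ → ℝ) (φ : ℕ → ℝ) (r : ℝ) (n : ℕ) :
    schrodingerAct V (fun m => φ m / r) n = schrodingerAct V φ n / r := by
  unfold schrodingerAct
  split <;> ring

lemma keyLemma (V : ℕ → ℝ) (E : ℝ) (φ : ℕ → ℕ → ℝ) (lo hi : ℕ → ℕ) (Bc : ℝ)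
    (hlo : ∀ j, 2 ≤ lo j) (hlh : ∀ j, lo j ≤ hi j) (hsep : ∀ j, hi j < lo (j+1))
    (hφsupp : ∀ j n, n ∉ Finset.Icc (lo j) (hi j) → φ j n = 0)
    (hNpos : ∀ j, 0 < ∑ n ∈ Finset.Icc (lo j) (hi j), φ j n ^ 2)
    (hNtop : Tendsto (fun j => ∑ n ∈ Finset.Icc (lo j) (hi j), φ j n ^ 2) atTop atTop)
    (hB : ∀ j, ∑ n ∈ Finset.Icc (lo j - 1) (hi j + 1),
        (schrodingerAct V (φ j) n - E * φ j n) ^ 2 ≤ Bc) :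
    IsWeylPoint V E := by
  set N : ℕ → ℝ := fun j => ∑ n ∈ Finset.Icc (lo j) (hi j), φ j n ^ 2 with hN
  have hNpos' : ∀ j, (0:ℝ) < Real.sqrt (N j) := fun j => Real.sqrt_pos.mpr (hNpos j)
  set ψ : ℕ → ℕ → ℝ := fun j n => φ j n / Real.sqrt (N j) with hψ
  -- support facts
  have hψsupp : ∀ j n, n ∉ Finset.Icc (lo j) (hi j) → ψ j n = 0 := by
    intro j n hn; simp [hψ, hφsupp j n hn]
  have hD : ∀ j n, schrodingerAct V (ψ j) n - E * ψ j n
      = (schrodingerAct V (φ j) n - E * φ j n) / Real.sqrt (N j) := by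
    intro j n
    have := schrodingerAct_div V (φ j) (Real.sqrt (N j)) n
    simp only [hψ]
    rw [this]; ring
  have hDφsupp : ∀ j n, n ∉ Finset.Icc (lo j - 1) (hi j + 1) →
      schrodingerAct V (φ j) n - E * φ j n = 0 := by
    intro j n hn
    rw [Finset.mem_Icc] at hn
    push_neg at hn
    have h2 := hlo j
    have hc : n < lo j - 1 ∨ hi j + 1 < n := by omega
    have hz : ∀ m, m ∉ Finset.Icc (lo j) (hi j) → φ j m = 0 := hφsupp j
    unfold schrodingerAct
    rcases hc with hc | hc
    · have h1 : φ j (n+1) = 0 := hz _ (by rw [Finset.mem_Icc]; omega)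
      have h0 : φ j n = 0 := hz _ (by rw [Finset.mem_Icc]; omega)
      split
      · simp [h1, h0]
      · have hm : φ j (n-1) = 0 := hz _ (by rw [Finset.mem_Icc]; omega)
        simp [h1, h0, hm]
    · have h1 : φ j (n+1) = 0 := hz _ (by rw [Finset.mem_Icc]; omega)
      have h0 : φ j n = 0 := hz _ (by rw [Finset.mem_Icc]; omega)
      have hm : φ j (n-1) = 0 := hz _ (by rw [Finset.mem_Icc]; omega)
      split <;> simp [h1, h0, hm]
  have hDψsupp : ∀ j n, n ∉ Finset.Icc (lo j - 1) (hi j + 1) →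
      schrodingerAct V (ψ j) n - E * ψ j n = 0 := by
    intro j n hn; rw [hD, hDφsupp j n hn, zero_div]
  -- disjointness
  have hchain : ∀ k j, k < j → hi k < lo j := by
    intro k j hkj
    induction j with
    | zero => omega
    | succ j ih =>
      rcases Nat.lt_succ_iff_lt_or_eq.mp hkj with h | h
      · exact lt_of_lt_of_le (ih h) (le_trans (hlh j) (le_of_lt (hsep j)))
      · subst h; exact hsep k
  refine ⟨ψ, ?_, ?_, ?_, ?_, ?_⟩
  · intro k
    exact hψsupp k 0 (by rw [Finset.mem_Icc]; have := hlo k; omega)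
  · intro k
    apply summable_of_ne_finset_zero (s := Finset.Icc (lo k) (hi k))
    intro n hn; rw [hψsupp k n hn]; ring
  · intro k
    apply summable_of_ne_finset_zero (s := Finset.Icc (lo k - 1) (hi k + 1))
    intro n hn; rw [hDψsupp k n hn]; ring
  · intro k j
    rcases eq_or_ne k j with h | h
    · subst h
      rw [if_pos rfl]
      rw [tsum_eq_sum (s := Finset.Icc (lo k) (hi k))
        (fun n hn => by rw [hψsupp k n hn]; ring)]
      have : ∀ n, ψ k n * ψ k n = φ k n ^ 2 / N k := by
        intro n
        simp only [hψ]
        rw [div_mul_div_comm, Real.mul_self_sqrt (le_of_lt (hNpos k))]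
        ring
      rw [Finset.sum_congr rfl (fun n _ => this n), ← Finset.sum_div]
      exact div_self (ne_of_gt (hNpos k))
    · rw [if_neg h]
      have hz : ∀ n, ψ k n * ψ j n = 0 := by
        intro n
        rcases lt_or_gt_of_ne h with hkj | hkj
        · rcases le_or_gt n (hi k) with hn | hn
          · rw [hψsupp j n (by rw [Finset.mem_Icc]; have := hchain k j hkj; omega)]; ring
          · rw [hψsupp k n (by rw [Finset.mem_Icc]; omega)]; ring
        · rcases le_or_gt n (hi j) with hn | hn
          · rw [hψsupp k n (by rw [Finset.mem_Icc]; have := hchain j k hkj; omega)]; ring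
          · rw [hψsupp j n (by rw [Finset.mem_Icc]; omega)]; ring
      simp [hz]
  · apply squeeze_zero (g := fun j => Bc / N j)
    · intro j
      exact tsum_nonneg (fun n => sq_nonneg _)
    · intro j
      rw [tsum_eq_sum (s := Finset.Icc (lo j - 1) (hi j + 1))
        (fun n hn => by rw [hDψsupp j n hn]; ring)]
      have heq : ∀ n, (schrodingerAct V (ψ j) n - E * ψ j n) ^ 2
          = (schrodingerAct V (φ j) n - E * φ j n) ^ 2 / N j := by
        intro n
        rw [hD, div_pow, Real.sq_sqrt (le_of_lt (hNpos j))]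
      rw [Finset.sum_congr rfl (fun n _ => heq n), ← Finset.sum_div]
      gcongr
      exact hB j
    · exact Tendsto.div_atTop tendsto_const_nhds hNtop

lemma selection (V : ℕ → ℝ) (ns : ℕ → ℕ)
    (hmono : StrictMono ns)
    (hgap : Tendsto (fun k => ns (k + 1) - ns k) atTop atTop)
    (hsupp : ∀ n : ℕ, n ∉ Set.range ns → V n = 0) :
    ∃ a : ℕ → ℕ, (∀ j, 2 ≤ a j) ∧
      (∀ j n, a j + 1 ≤ n → n ≤ a j + 2*j + 8 → V n = 0) ∧
      (∀ j, a j + 2*j + 9 ≤ a (j+1)) := by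
  have hN : ∀ C : ℕ, ∃ N : ℕ, ∀ m, N ≤ m → C ≤ ns (m+1) - ns m := by
    intro C
    exact (hgap.eventually_ge_atTop C).exists_forall_of_atTop
  choose N hNspec using hN
  set M : ℕ → ℕ := fun j => j + 1 + (Finset.range (j+1)).sup (fun i => N (2*i+10)) with hM
  have hMge : ∀ j, N (2*j+10) ≤ M j := by
    intro j
    have : N (2*j+10) ≤ (Finset.range (j+1)).sup (fun i => N (2*i+10)) :=
      Finset.le_sup (f := fun i => N (2*i+10)) (Finset.self_mem_range_succ j)
    simp only [hM]
    omega
  have hMmono : ∀ j, M j + 1 ≤ M (j+1) := by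
    intro j
    have : (Finset.range (j+1)).sup (fun i => N (2*i+10)) ≤
        (Finset.range (j+1+1)).sup (fun i => N (2*i+10)) :=
      Finset.sup_mono (Finset.range_subset_range.mpr (by omega))
    simp only [hM]; omega
  have hgap' : ∀ j, ns (M j) + 2*j + 10 ≤ ns (M j + 1) := by
    intro j
    have h1 := hNspec (2*j+10) (M j) (hMge j)
    have h2 : ns (M j) < ns (M j + 1) := hmono (by omega)
    omega
  refine ⟨fun j => ns (M j) + 1, ?_, ?_, ?_⟩
  · intro j
    dsimp only
    have h : M j ≤ ns (M j) := hmono.le_apply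
    simp only [hM] at h ⊢
    omega
  · intro j n h1 h2
    dsimp only at h1 h2
    apply hsupp
    rintro ⟨i, rfl⟩
    have hg := hgap' j
    rcases le_or_gt i (M j) with hi | hi
    · have := hmono.monotone hi
      omega
    · have := hmono.monotone (show M j + 1 ≤ i by omega)
      omega
  · intro j
    dsimp only
    have h1 := hgap' j
    have h2 := hmono.monotone (hMmono j)
    omega

lemma caseMid (V : ℕ → ℝ) (E : ℝ) (a : ℕ → ℕ)
    (ha2 : ∀ j, 2 ≤ a j)
    (haV : ∀ j n, a j + 1 ≤ n → n ≤ a j + 2*j + 8 → V n = 0)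
    (hasep : ∀ j, a j + 2*j + 9 ≤ a (j+1))
    (hE1 : -2 < E) (hE2 : E < 2) : IsWeylPoint V E := by
  set θ : ℝ := Real.arccos (E/2) with hθ
  have hcos : Real.cos θ = E/2 := Real.cos_arccos (by linarith) (by linarith)
  have hE' : 2 * Real.cos θ = E := by rw [hcos]; ring
  set c : ℝ := 1 - |Real.cos θ| with hc
  have hcpos : 0 < c := by
    have : |Real.cos θ| < 1 := by rw [hcos]; rw [abs_lt]; constructor <;> linarith
    simp only [hc]; linarith
  set φ : ℕ → ℕ → ℝ := fun j n =>
    if a j + 1 ≤ n ∧ n ≤ a j + (2*j+2) then Real.sin (((n:ℝ) - (a j:ℝ)) * θ) else 0 with hφ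
  have hφx : ∀ j (x : ℕ), x ≤ 2*j+2 → φ j (a j + x) = Real.sin ((x:ℝ) * θ) := by
    intro j x hx
    rcases Nat.eq_zero_or_pos x with h | h
    · subst h
      simp only [hφ, if_neg (by omega : ¬(a j + 1 ≤ a j + 0 ∧ a j + 0 ≤ a j + (2*j+2)))]
      rw [Nat.cast_zero, zero_mul, Real.sin_zero]
    · simp only [hφ, if_pos (⟨by omega, by omega⟩ : a j + 1 ≤ a j + x ∧ a j + x ≤ a j + (2*j+2))]
      congr 1
      push_cast
      ring
  have hφsupp : ∀ j n, n ∉ Finset.Icc (a j + 1) (a j + (2*j+2)) → φ j n = 0 := by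
    intro j n hn
    rw [Finset.mem_Icc] at hn
    simp only [hφ, if_neg (by omega : ¬(a j + 1 ≤ n ∧ n ≤ a j + (2*j+2)))]
  have hNlb : ∀ j : ℕ, ((j:ℝ)+1) * c ≤ ∑ n ∈ Finset.Icc (a j + 1) (a j + (2*j+2)), φ j n ^ 2 := by
    intro j
    have hmap : Finset.Icc (a j + 1) (a j + (2*j+2))
        = Finset.map (addLeftEmbedding (a j)) (Finset.Icc 1 (2*(j+1))) := by
      have h2 : a j + (2*j+2) = a j + 2*(j+1) := by omega
      rw [h2, Finset.map_add_left_Icc]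
    rw [hmap, Finset.sum_map]
    have hterm : ∀ x ∈ Finset.Icc 1 (2*(j+1)),
        φ j (addLeftEmbedding (a j) x) ^ 2 = Real.sin ((x:ℝ) * θ) ^ 2 := by
      intro x hx
      rw [Finset.mem_Icc] at hx
      have h1 : addLeftEmbedding (a j) x = a j + x := rfl
      rw [h1, hφx j x (by omega)]
    rw [Finset.sum_congr rfl hterm, sum_Icc_pair (fun x => Real.sin ((x:ℝ) * θ) ^ 2) (j+1)]
    have hpair : ∀ i ∈ Finset.range (j+1),
        c ≤ Real.sin (((2*i+1:ℕ):ℝ) * θ) ^ 2 + Real.sin (((2*i+2:ℕ):ℝ) * θ) ^ 2 := by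
      intro i _
      have h := sin_pair θ (((2*i+1:ℕ):ℝ) * θ)
      have hx : ((2*i+1:ℕ):ℝ) * θ + θ = ((2*i+2:ℕ):ℝ) * θ := by push_cast; ring
      rw [hx] at h
      exact h
    calc ((j:ℝ)+1) * c = (Finset.range (j+1)).card • c := by
          rw [Finset.card_range, nsmul_eq_mul]; push_cast; ring
      _ ≤ _ := Finset.card_nsmul_le_sum _ _ _ hpair
  apply keyLemma V E φ (fun j => a j + 1) (fun j => a j + (2*j+2)) 3
  · intro j; have := ha2 j; omega
  · intro j; omega
  · intro j; have := hasep j; omega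
  · exact hφsupp
  · intro j
    calc (0:ℝ) < ((j:ℝ)+1) * c := by positivity
      _ ≤ _ := hNlb j
  · apply tendsto_atTop_mono hNlb
    exact Tendsto.atTop_mul_const hcpos
      (tendsto_atTop_add_const_right _ 1 tendsto_natCast_atTop_atTop)
  · intro j
    have hA2 := ha2 j
    have hact : ∀ n, 2 ≤ n → schrodingerAct V (φ j) n - E * φ j n
        = φ j (n-1) + φ j (n+1) + V n * φ j n - E * φ j n := by
      intro n hn
      unfold schrodingerAct
      rw [if_neg (by omega)]
    set D : ℕ → ℝ := fun n => schrodingerAct V (φ j) n - E * φ j n with hD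
    have hint : ∀ n, a j + 1 ≤ n → n ≤ a j + (2*j+1) → D n = 0 := by
      intro n h1 h2
      obtain ⟨x, hx1, hx2, rfl⟩ : ∃ x, 1 ≤ x ∧ x ≤ 2*j+1 ∧ n = a j + x :=
        ⟨n - a j, by omega, by omega, by omega⟩
      have hV : V (a j + x) = 0 := haV j (a j + x) (by omega) (by omega)
      have em : φ j (a j + x - 1) = Real.sin (((x:ℝ) - 1) * θ) := by
        have h1 : a j + x - 1 = a j + (x-1) := by omega
        rw [h1, hφx j (x-1) (by omega)]
        congr 1
        push_cast [hx1]
        ring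
      have ep : φ j (a j + x + 1) = Real.sin (((x:ℝ) + 1) * θ) := by
        have h1 : a j + x + 1 = a j + (x+1) := by omega
        rw [h1, hφx j (x+1) (by omega)]
        congr 1
        push_cast
        ring
      have e0 : φ j (a j + x) = Real.sin ((x:ℝ) * θ) := hφx j x (by omega)
      simp only [hD]
      rw [hact (a j + x) (by omega), em, ep, e0, hV]
      linear_combination sin_rec θ (x:ℝ) + Real.sin ((x:ℝ) * θ) * hE'
    have hDA : D (a j) ^ 2 ≤ 1 := by
      have e0 : φ j (a j) = 0 := hφsupp j (a j) (by rw [Finset.mem_Icc]; omega)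
      have em : φ j (a j - 1) = 0 := hφsupp j (a j - 1) (by rw [Finset.mem_Icc]; omega)
      have e1 : φ j (a j + 1) = Real.sin ((1:ℝ) * θ) := by
        have := hφx j 1 (by omega)
        rwa [Nat.cast_one] at this
      have hval : D (a j) = Real.sin ((1:ℝ) * θ) := by
        simp only [hD]
        rw [hact (a j) (by omega), e0, em, e1]
        ring
      rw [hval]
      exact Real.sin_sq_le_one _
    have hDK : D (a j + (2*j+2)) ^ 2 ≤ 1 := by
      have em : φ j (a j + (2*j+2) - 1) = Real.sin (((2*j+1:ℕ):ℝ) * θ) := by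
        have h1 : a j + (2*j+2) - 1 = a j + (2*j+1) := by omega
        rw [h1, hφx j (2*j+1) (by omega)]
      have ep : φ j (a j + (2*j+2) + 1) = 0 :=
        hφsupp j _ (by rw [Finset.mem_Icc]; omega)
      have e0 : φ j (a j + (2*j+2)) = Real.sin (((2*j+2:ℕ):ℝ) * θ) := hφx j (2*j+2) (by omega)
      have hV : V (a j + (2*j+2)) = 0 := haV j _ (by omega) (by omega)
      have hval : D (a j + (2*j+2)) = -Real.sin ((((2*j+2:ℕ):ℝ) + 1) * θ) := by
        simp only [hD]
        rw [hact (a j + (2*j+2)) (by omega), em, ep, e0, hV]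
        have hc1 : ((2*j+1:ℕ):ℝ) = ((2*j+2:ℕ):ℝ) - 1 := by push_cast; ring
        rw [hc1]
        linear_combination sin_rec θ ((2*j+2:ℕ):ℝ) + Real.sin (((2*j+2:ℕ):ℝ) * θ) * hE'
      rw [hval, neg_sq]
      exact Real.sin_sq_le_one _
    have hDK1 : D (a j + (2*j+3)) ^ 2 ≤ 1 := by
      have em : φ j (a j + (2*j+3) - 1) = Real.sin (((2*j+2:ℕ):ℝ) * θ) := by
        have h1 : a j + (2*j+3) - 1 = a j + (2*j+2) := by omega
        rw [h1, hφx j (2*j+2) (by omega)]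
      have ep : φ j (a j + (2*j+3) + 1) = 0 :=
        hφsupp j _ (by rw [Finset.mem_Icc]; omega)
      have e0 : φ j (a j + (2*j+3)) = 0 :=
        hφsupp j _ (by rw [Finset.mem_Icc]; omega)
      have hval : D (a j + (2*j+3)) = Real.sin (((2*j+2:ℕ):ℝ) * θ) := by
        simp only [hD]
        rw [hact (a j + (2*j+3)) (by omega), em, ep, e0]
        ring
      rw [hval]
      exact Real.sin_sq_le_one _
    have htr : ({a j, a j + (2*j+2), a j + (2*j+3)} : Finset ℕ)
        ⊆ Finset.Icc (a j + 1 - 1) (a j + (2*j+2) + 1) := by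
      intro x hx
      simp only [Finset.mem_insert, Finset.mem_singleton] at hx
      rw [Finset.mem_Icc]
      rcases hx with h|h|h <;> omega
    have hvan : ∀ x ∈ Finset.Icc (a j + 1 - 1) (a j + (2*j+2) + 1),
        x ∉ ({a j, a j + (2*j+2), a j + (2*j+3)} : Finset ℕ) → D x ^ 2 = 0 := by
      intro x hx hx'
      rw [Finset.mem_Icc] at hx
      simp only [Finset.mem_insert, Finset.mem_singleton] at hx'
      push_neg at hx'
      rw [hint x (by omega) (by omega)]
      ring
    calc ∑ n ∈ Finset.Icc (a j + 1 - 1) (a j + (2*j+2) + 1),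
          (schrodingerAct V (φ j) n - E * φ j n) ^ 2
        = ∑ n ∈ Finset.Icc (a j + 1 - 1) (a j + (2*j+2) + 1), D n ^ 2 := rfl
      _ = ∑ n ∈ ({a j, a j + (2*j+2), a j + (2*j+3)} : Finset ℕ), D n ^ 2 :=
          (Finset.sum_subset htr hvan).symm
      _ = D (a j) ^ 2 + D (a j + (2*j+2)) ^ 2 + D (a j + (2*j+3)) ^ 2 := by
          rw [Finset.sum_insert (by simp), Finset.sum_insert (by simp),
            Finset.sum_singleton]
          ring
      _ ≤ 3 := by linarith

lemma caseEdge (V : ℕ → ℝ) (E : ℝ) (a : ℕ → ℕ)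
    (ha2 : ∀ j, 2 ≤ a j)
    (haV : ∀ j n, a j + 1 ≤ n → n ≤ a j + 2*j + 8 → V n = 0)
    (hasep : ∀ j, a j + 2*j + 9 ≤ a (j+1))
    (hE : E = 2 ∨ E = -2) : IsWeylPoint V E := by
  set s : ℝ := E/2 with hsdef
  have hs2 : s^2 = 1 := by rcases hE with h | h <;> (rw [hsdef, h]; norm_num)
  have hEs : E = 2*s := by rw [hsdef]; ring
  set tv : ℕ → ℕ → ℝ := fun j x => if x ≤ j+1 then (x:ℝ) else 2*((j:ℝ)+1) - x with htv
  set φ : ℕ → ℕ → ℝ := fun j n =>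
    if a j + 1 ≤ n ∧ n ≤ a j + (2*j+1) then s^n * tv j (n - a j) else 0 with hφ
  have hsq : ∀ m : ℕ, (s^m)^2 = 1 := by
    intro m
    rw [← pow_mul, mul_comm, pow_mul, hs2, one_pow]
  have hφx : ∀ j (x : ℕ), x ≤ 2*j+2 → φ j (a j + x) = s^(a j + x) * tv j x := by
    intro j x hx
    rcases Nat.eq_zero_or_pos x with h | h
    · subst h
      simp only [hφ, if_neg (by omega : ¬(a j + 1 ≤ a j + 0 ∧ a j + 0 ≤ a j + (2*j+1)))]
      simp only [htv]
      norm_num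
    · rcases Nat.lt_or_ge x (2*j+2) with h2 | h2
      · simp only [hφ,
          if_pos (⟨by omega, by omega⟩ : a j + 1 ≤ a j + x ∧ a j + x ≤ a j + (2*j+1))]
        congr 2
        omega
      · have hx2 : x = 2*j+2 := by omega
        subst hx2
        simp only [hφ, if_neg (by omega : ¬(a j + 1 ≤ a j + (2*j+2) ∧ a j + (2*j+2) ≤ a j + (2*j+1)))]
        have : tv j (2*j+2) = 0 := by
          simp only [htv, if_neg (by omega : ¬(2*j+2 ≤ j+1))]
          push_cast
          ring
        rw [this, mul_zero]
  have hφsupp : ∀ j n, n ∉ Finset.Icc (a j + 1) (a j + (2*j+1)) → φ j n = 0 := by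
    intro j n hn
    rw [Finset.mem_Icc] at hn
    simp only [hφ, if_neg (by omega : ¬(a j + 1 ≤ n ∧ n ≤ a j + (2*j+1)))]
  have hNlb : ∀ j : ℕ, ((j:ℝ)+1)^2 ≤ ∑ n ∈ Finset.Icc (a j + 1) (a j + (2*j+1)), φ j n ^ 2 := by
    intro j
    have hmem : a j + (j+1) ∈ Finset.Icc (a j + 1) (a j + (2*j+1)) := by
      rw [Finset.mem_Icc]; omega
    have hval : φ j (a j + (j+1)) ^ 2 = ((j:ℝ)+1)^2 := by
      rw [hφx j (j+1) (by omega)]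
      have : tv j (j+1) = (j:ℝ)+1 := by
        simp only [htv, if_pos (le_refl (j+1))]
        push_cast; ring
      rw [this, mul_pow, hsq]
      ring
    calc ((j:ℝ)+1)^2 = φ j (a j + (j+1)) ^ 2 := hval.symm
      _ ≤ _ := Finset.single_le_sum (fun i _ => sq_nonneg (φ j i)) hmem
  apply keyLemma V E φ (fun j => a j + 1) (fun j => a j + (2*j+1)) 6
  · intro j; have := ha2 j; omega
  · intro j; omega
  · intro j; have := hasep j; omega
  · exact hφsupp
  · intro j
    calc (0:ℝ) < ((j:ℝ)+1)^2 := by positivity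
      _ ≤ _ := hNlb j
  · have hNlb' : ∀ j : ℕ, ((j:ℝ)+1) ≤ ∑ n ∈ Finset.Icc (a j + 1) (a j + (2*j+1)), φ j n ^ 2 := by
      intro j
      refine le_trans ?_ (hNlb j)
      nlinarith [Nat.cast_nonneg (α := ℝ) j]
    apply tendsto_atTop_mono hNlb'
    exact tendsto_atTop_add_const_right _ 1 tendsto_natCast_atTop_atTop
  · intro j
    have hA2 := ha2 j
    have hact : ∀ n, 2 ≤ n → schrodingerAct V (φ j) n - E * φ j n
        = φ j (n-1) + φ j (n+1) + V n * φ j n - E * φ j n := by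
      intro n hn
      unfold schrodingerAct
      rw [if_neg (by omega)]
    set D : ℕ → ℝ := fun n => schrodingerAct V (φ j) n - E * φ j n with hD
    -- interior: D (a j + x) = s^(a j + (x-1)) * (tv (x-1) + tv (x+1) - 2 tv x)
    have hintval : ∀ x : ℕ, 1 ≤ x → x ≤ 2*j+1 →
        D (a j + x) = s^(a j + (x-1)) * (tv j (x-1) + tv j (x+1) - 2 * tv j x) := by
      intro x hx1 hx2
      have hV : V (a j + x) = 0 := haV j (a j + x) (by omega) (by omega)
      have em : φ j (a j + x - 1) = s^(a j + (x-1)) * tv j (x-1) := by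
        have h1 : a j + x - 1 = a j + (x-1) := by omega
        rw [h1, hφx j (x-1) (by omega)]
      have ep : φ j (a j + x + 1) = s^(a j + (x+1)) * tv j (x+1) := by
        have h1 : a j + x + 1 = a j + (x+1) := by omega
        rw [h1, hφx j (x+1) (by omega)]
      have e0 : φ j (a j + x) = s^(a j + x) * tv j x := hφx j x (by omega)
      simp only [hD]
      rw [hact (a j + x) (by omega), em, ep, e0, hV, hEs]
      have h2 : a j + (x+1) = (a j + (x-1)) + 2 := by omega
      have h1 : a j + x = (a j + (x-1)) + 1 := by omega
      rw [h2, h1]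
      have hp2 : s ^ (a j + (x - 1) + 2) = s ^ (a j + (x - 1)) := by
        rw [pow_add, hs2, mul_one]
      have hp1 : 2 * s * s ^ (a j + (x - 1) + 1) = 2 * s ^ (a j + (x - 1)) := by
        rw [pow_succ]
        linear_combination 2 * s ^ (a j + (x-1)) * hs2
      linear_combination tv j (x+1) * hp2 - tv j x * hp1
    have hint : ∀ n, a j + 1 ≤ n → n ≤ a j + (2*j+1) → n ≠ a j + (j+1) → D n = 0 := by
      intro n h1 h2 h3
      obtain ⟨x, hx1, hx2, hx3, rfl⟩ : ∃ x, 1 ≤ x ∧ x ≤ 2*j+1 ∧ x ≠ j+1 ∧ n = a j + x :=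
        ⟨n - a j, by omega, by omega, by omega, by omega⟩
      rw [hintval x hx1 hx2]
      have hzero : tv j (x-1) + tv j (x+1) - 2 * tv j x = 0 := by
        rcases Nat.lt_or_ge x (j+1) with h | h
        · simp only [htv, if_pos (by omega : x - 1 ≤ j+1), if_pos (by omega : x + 1 ≤ j+1),
            if_pos (by omega : x ≤ j+1)]
          push_cast [hx1]
          ring
        · have h' : j + 1 < x := by omega
          have e1 : tv j (x-1) = 2*((j:ℝ)+1) - ((x:ℝ)-1) := by
            rcases Nat.lt_or_ge (j+2) x with hlt | hle
            · simp only [htv, if_neg (by omega : ¬(x - 1 ≤ j+1))]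
              push_cast [hx1]
              ring
            · obtain rfl : x = j + 2 := by omega
              rw [show j+2-1 = j+1 from by omega]
              simp only [htv, if_pos (le_refl (j+1))]
              push_cast
              ring
          have e2 : tv j (x+1) = 2*((j:ℝ)+1) - ((x:ℝ)+1) := by
            simp only [htv, if_neg (by omega : ¬(x + 1 ≤ j+1))]
            try push_cast
            try ring
          have e3 : tv j x = 2*((j:ℝ)+1) - (x:ℝ) := by
            simp only [htv, if_neg (by omega : ¬(x ≤ j+1))]
            try push_cast
            try ring
          rw [e1, e2, e3]
          ring
      rw [hzero, mul_zero]
    have hDA : D (a j) ^ 2 ≤ 1 := by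
      have e0 : φ j (a j) = 0 := hφsupp j (a j) (by rw [Finset.mem_Icc]; omega)
      have em : φ j (a j - 1) = 0 := hφsupp j (a j - 1) (by rw [Finset.mem_Icc]; omega)
      have e1 : φ j (a j + 1) = s^(a j + 1) * tv j 1 := hφx j 1 (by omega)
      have htv1 : tv j 1 = 1 := by
        simp only [htv, if_pos (by omega : 1 ≤ j+1)]
        norm_num
      have hval : D (a j) = s^(a j + 1) := by
        simp only [hD]
        rw [hact (a j) (by omega), e0, em, e1, htv1]
        ring
      rw [hval, hsq]
    have hDM : D (a j + (j+1)) ^ 2 ≤ 4 := by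
      have hval := hintval (j+1) (by omega) (by omega)
      have hsec : tv j (j+1-1) + tv j (j+1+1) - 2 * tv j (j+1) = -2 := by
        have e1 : tv j (j+1-1) = (j:ℝ) := by
          have h1 : j+1-1 = j := by omega
          rw [h1]
          simp only [htv, if_pos (by omega : j ≤ j+1)]
        have e2 : tv j (j+1+1) = (j:ℝ) := by
          simp only [htv, if_neg (by omega : ¬(j+1+1 ≤ j+1))]
          push_cast
          ring
        have e3 : tv j (j+1) = (j:ℝ)+1 := by
          simp only [htv, if_pos (le_refl (j+1))]
          push_cast
          ring
        rw [e1, e2, e3]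
        ring
      rw [hval, hsec]
      have : (s ^ (a j + (j + 1 - 1)) * (-2 : ℝ)) ^ 2 = 4 := by
        rw [mul_pow, hsq]
        norm_num
      rw [this]
    have hDE : D (a j + (2*j+2)) ^ 2 ≤ 1 := by
      have em : φ j (a j + (2*j+2) - 1) = s^(a j + (2*j+1)) * tv j (2*j+1) := by
        have h1 : a j + (2*j+2) - 1 = a j + (2*j+1) := by omega
        rw [h1, hφx j (2*j+1) (by omega)]
      have htve : tv j (2*j+1) = 1 := by
        simp only [htv]
        split
        · have hj : j = 0 := by omega
          subst hj
          norm_num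
        · push_cast
          ring
      have ep : φ j (a j + (2*j+2) + 1) = 0 := hφsupp j _ (by rw [Finset.mem_Icc]; omega)
      have e0 : φ j (a j + (2*j+2)) = 0 := hφsupp j _ (by rw [Finset.mem_Icc]; omega)
      have hval : D (a j + (2*j+2)) = s^(a j + (2*j+1)) := by
        simp only [hD]
        rw [hact (a j + (2*j+2)) (by omega), em, ep, e0, htve]
        ring
      rw [hval, hsq]
    have htr : ({a j, a j + (j+1), a j + (2*j+2)} : Finset ℕ)
        ⊆ Finset.Icc (a j + 1 - 1) (a j + (2*j+1) + 1) := by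
      intro x hx
      simp only [Finset.mem_insert, Finset.mem_singleton] at hx
      rw [Finset.mem_Icc]
      rcases hx with h|h|h <;> omega
    have hvan : ∀ x ∈ Finset.Icc (a j + 1 - 1) (a j + (2*j+1) + 1),
        x ∉ ({a j, a j + (j+1), a j + (2*j+2)} : Finset ℕ) → D x ^ 2 = 0 := by
      intro x hx hx'
      rw [Finset.mem_Icc] at hx
      simp only [Finset.mem_insert, Finset.mem_singleton] at hx'
      push_neg at hx'
      rw [hint x (by omega) (by omega) (by omega)]
      ring
    calc ∑ n ∈ Finset.Icc (a j + 1 - 1) (a j + (2*j+1) + 1),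
          (schrodingerAct V (φ j) n - E * φ j n) ^ 2
        = ∑ n ∈ Finset.Icc (a j + 1 - 1) (a j + (2*j+1) + 1), D n ^ 2 := rfl
      _ = ∑ n ∈ ({a j, a j + (j+1), a j + (2*j+2)} : Finset ℕ), D n ^ 2 :=
          (Finset.sum_subset htr hvan).symm
      _ = D (a j) ^ 2 + D (a j + (j+1)) ^ 2 + D (a j + (2*j+2)) ^ 2 := by
          rw [Finset.sum_insert (by simp only [Finset.mem_insert, Finset.mem_singleton]; omega),
            Finset.sum_insert (by simp only [Finset.mem_singleton]; omega),
            Finset.sum_singleton]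
          ring
      _ ≤ 6 := by linarith

theorem stmt_11 (V : ℕ → ℝ) (ns : ℕ → ℕ)
    (hmono : StrictMono ns)
    (hgap : Tendsto (fun k => ns (k + 1) - ns k) atTop atTop)
    (hsupp : ∀ n : ℕ, n ∉ Set.range ns → V n = 0)
    (hbig : Tendsto (fun k => V (ns k)) atTop atTop) :
    ∀ E ∈ Set.Icc (-2 : ℝ) 2, IsWeylPoint V E := by
  intro E hE
  obtain ⟨a, ha2, haV, hasep⟩ := selection V ns hmono hgap hsupp
  rcases eq_or_lt_of_le hE.1 with h1 | h1
  · exact caseEdge V E a ha2 haV hasep (Or.inr h1.symm)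
  · rcases eq_or_lt_of_le hE.2 with h2 | h2
    · exact caseEdge V E a ha2 haV hasep (Or.inl h2)
    · exact caseMid V E a ha2 haV hasep h1 h2
end

section
/- Let Δ be the free discrete Laplacian on ℓ²(ℕ) and V : ℕ → ℝ a potential supported on a strictly increasing sequence (n_k) with gaps n_k − n_{k−1} → ∞ and V(n_k) → ∞. Then for every E ∉ [−2,2], E is not in the essential spectrum of H = Δ + V; hence σ_ess(H) = [−2,2]. -/
open Filter

/-
Let `ψ k` be a Weyl sequence for `E`. Being orthonormal, it tends to `0` weakly, so each
coordinate `ψ k m` tends to `0` (Bessel's inequality). Outside a finite set of sites, `V` is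
either `0` or at least any prescribed level `M`, so the quadratic form `⟨ψ k, V ψ k⟩` is, up to
finitely many coordinates, nonnegative and at most `‖V ψ k‖² / M`. As `V ψ k = (H - E) ψ k - Δ ψ k
+ E ψ k` stays bounded in `ℓ²`, the quadratic form tends to `0`. Finally
`⟨ψ k, (H - E) ψ k⟩ → 0` and `|⟨ψ k, Δ ψ k⟩| ≤ 2`, which forces `|E| ≤ 2`.
-/

open Topology

variable {α : Type*}

noncomputable def toL2 (f : α → ℝ) (hf : Summable fun n => f n ^ 2) : lp (fun _ : α => ℝ) 2 :=
  ⟨f, (memℓp_gen_iff (by norm_num)).2 (by simpa using hf)⟩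

lemma inner_toL2 {f g : α → ℝ} (hf : Summable fun n => f n ^ 2)
    (hg : Summable fun n => g n ^ 2) : inner ℝ (toL2 f hf) (toL2 g hg) = ∑' n, f n * g n := by
  simp [lp.inner_eq_tsum, toL2, mul_comm]

lemma Summable.mul_of_sq {f g : α → ℝ} (hf : Summable fun n => f n ^ 2)
    (hg : Summable fun n => g n ^ 2) : Summable fun n => f n * g n := by
  simpa [toL2, mul_comm] using lp.summable_inner (𝕜 := ℝ) (toL2 f hf) (toL2 g hg)

lemma summable_mul_sq {V ψ : α → ℝ} (hψ : Summable fun n => ψ n ^ 2)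
    (hVψ : Summable fun n => (V n * ψ n) ^ 2) : Summable fun n => V n * ψ n ^ 2 :=
  (hVψ.mul_of_sq hψ).congr fun n => by ring

lemma tsum_mul_sq_le_sq_mul_sq {f g : α → ℝ} (hf : Summable fun n => f n ^ 2)
    (hg : Summable fun n => g n ^ 2) :
    (∑' n, f n * g n) ^ 2 ≤ (∑' n, f n ^ 2) * ∑' n, g n ^ 2 := by
  simpa only [inner_toL2, ← sq] using real_inner_mul_inner_self_le (toL2 f hf) (toL2 g hg)

lemma summable_sq_apply_of_orthonormal {ι : Type*} [DecidableEq ι] {ψ : ι → α → ℝ}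
    (hψ : ∀ k, Summable fun n => ψ k n ^ 2)
    (horth : ∀ k j, ∑' n, ψ k n * ψ j n = if k = j then 1 else 0) (m : α) :
    Summable fun k => ψ k m ^ 2 := by
  have hon : Orthonormal ℝ fun k => toL2 (ψ k) (hψ k) :=
    orthonormal_iff_ite.2 fun k j => by rw [inner_toL2, horth]
  classical
  simpa [lp.inner_single_right, toL2] using hon.inner_products_summable (lp.single 2 m (1 : ℝ))

lemma abs_tsum_mul_le_of_tsum_sq_le {f g : α → ℝ} (hf : Summable fun n => f n ^ 2)
    (hg : Summable fun n => g n ^ 2) (hgf : ∑' n, g n ^ 2 ≤ ∑' n, f n ^ 2) :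
    |∑' n, f n * g n| ≤ ∑' n, f n ^ 2 := by
  have hf0 : 0 ≤ ∑' n, f n ^ 2 := tsum_nonneg fun n => sq_nonneg _
  refine abs_le_of_sq_le_sq ?_ hf0
  calc (∑' n, f n * g n) ^ 2 ≤ (∑' n, f n ^ 2) * ∑' n, g n ^ 2 := tsum_mul_sq_le_sq_mul_sq hf hg
    _ ≤ (∑' n, f n ^ 2) ^ 2 := by rw [sq]; exact mul_le_mul_of_nonneg_left hgf hf0

def dirichletShift (ψ : ℕ → ℝ) (n : ℕ) : ℝ := if n ≤ 1 then 0 else ψ (n - 1)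

lemma schrodingerAct_eq (V ψ : ℕ → ℝ) (n : ℕ) :
    schrodingerAct V ψ n = dirichletShift ψ n + ψ (n + 1) + V n * ψ n := rfl

lemma summable_sq_succ {ψ : ℕ → ℝ} (hψ : Summable fun n => ψ n ^ 2) :
    Summable fun n => ψ (n + 1) ^ 2 :=
  (summable_nat_add_iff 1).2 hψ

lemma tsum_sq_succ_le {ψ : ℕ → ℝ} (hψ : Summable fun n => ψ n ^ 2) :
    ∑' n, ψ (n + 1) ^ 2 ≤ ∑' n, ψ n ^ 2 :=
  tsum_comp_le_tsum_of_inj (f := fun n => ψ n ^ 2) hψ (fun _ => sq_nonneg _)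
    (add_left_injective 1)

lemma summable_sq_dirichletShift {ψ : ℕ → ℝ} (hψ : Summable fun n => ψ n ^ 2) :
    Summable fun n => dirichletShift ψ n ^ 2 :=
  (summable_nat_add_iff 2).1 <| by simpa [dirichletShift] using summable_sq_succ hψ

lemma tsum_sq_dirichletShift_le {ψ : ℕ → ℝ} (hψ : Summable fun n => ψ n ^ 2) :
    ∑' n, dirichletShift ψ n ^ 2 ≤ ∑' n, ψ n ^ 2 := by
  rw [← (summable_sq_dirichletShift hψ).sum_add_tsum_nat_add 2]
  simpa [Finset.sum_range_succ, dirichletShift] using tsum_sq_succ_le hψ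

section Residual

variable {V ψ : ℕ → ℝ} {E : ℝ}

lemma sq_potential_mul_le (n : ℕ) :
    (V n * ψ n) ^ 2 ≤ 4 * ((schrodingerAct V ψ n - E * ψ n) ^ 2 + dirichletShift ψ n ^ 2
      + ψ (n + 1) ^ 2 + E ^ 2 * ψ n ^ 2) := by
  have hV : V n * ψ n = (schrodingerAct V ψ n - E * ψ n) - dirichletShift ψ n - ψ (n + 1)
      + E * ψ n := by
    rw [schrodingerAct_eq]; ring
  set a := schrodingerAct V ψ n - E * ψ n
  set b := dirichletShift ψ n
  set c := ψ (n + 1)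
  rw [hV]
  nlinarith [sq_nonneg (a + b), sq_nonneg (a + c), sq_nonneg (a - E * ψ n), sq_nonneg (b - c),
    sq_nonneg (b + E * ψ n), sq_nonneg (c + E * ψ n)]

lemma summable_sq_potential_mul (hψ : Summable fun n => ψ n ^ 2)
    (hφ : Summable fun n => (schrodingerAct V ψ n - E * ψ n) ^ 2) :
    Summable fun n => (V n * ψ n) ^ 2 :=
  .of_nonneg_of_le (fun _ => sq_nonneg _) sq_potential_mul_le
    ((((hφ.add (summable_sq_dirichletShift hψ)).add (summable_sq_succ hψ)).add
      (hψ.mul_left _)).mul_left 4)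

lemma tsum_sq_potential_mul_le (hψ : Summable fun n => ψ n ^ 2)
    (hφ : Summable fun n => (schrodingerAct V ψ n - E * ψ n) ^ 2) :
    ∑' n, (V n * ψ n) ^ 2 ≤
      4 * (∑' n, (schrodingerAct V ψ n - E * ψ n) ^ 2 + (2 + E ^ 2) * ∑' n, ψ n ^ 2) := by
  have hR := summable_sq_dirichletShift hψ
  have hL := summable_sq_succ hψ
  have hE := hψ.mul_left (E ^ 2)
  calc ∑' n, (V n * ψ n) ^ 2
      ≤ ∑' n, 4 * ((schrodingerAct V ψ n - E * ψ n) ^ 2 + dirichletShift ψ n ^ 2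
          + ψ (n + 1) ^ 2 + E ^ 2 * ψ n ^ 2) :=
        (summable_sq_potential_mul hψ hφ).tsum_le_tsum sq_potential_mul_le
          ((((hφ.add hR).add hL).add hE).mul_left 4)
    _ = 4 * (∑' n, (schrodingerAct V ψ n - E * ψ n) ^ 2 + ∑' n, dirichletShift ψ n ^ 2
          + ∑' n, ψ (n + 1) ^ 2 + E ^ 2 * ∑' n, ψ n ^ 2) := by
        rw [tsum_mul_left, ((hφ.add hR).add hL).tsum_add hE, (hφ.add hR).tsum_add hL,
          hφ.tsum_add hR, tsum_mul_left]
    _ ≤ _ := by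
        nlinarith [tsum_sq_dirichletShift_le hψ, tsum_sq_succ_le hψ]

lemma tsum_mul_schrodingerAct_sub (hψ : Summable fun n => ψ n ^ 2)
    (hVψ : Summable fun n => (V n * ψ n) ^ 2) :
    ∑' n, ψ n * (schrodingerAct V ψ n - E * ψ n) =
      ∑' n, ψ n * dirichletShift ψ n + ∑' n, ψ n * ψ (n + 1) + ∑' n, V n * ψ n ^ 2
        - E * ∑' n, ψ n ^ 2 := by
  have hR := hψ.mul_of_sq (summable_sq_dirichletShift hψ)
  have hL := hψ.mul_of_sq (summable_sq_succ hψ)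
  have hV := summable_mul_sq hψ hVψ
  rw [← tsum_mul_left, ← hR.tsum_add hL, ← (hR.add hL).tsum_add hV,
    ← ((hR.add hL).add hV).tsum_sub (hψ.mul_left E)]
  congr 1 with n
  rw [schrodingerAct_eq]; ring

lemma abs_tsum_mul_sq_sub_le (hψ : Summable fun n => ψ n ^ 2)
    (hφ : Summable fun n => (schrodingerAct V ψ n - E * ψ n) ^ 2) :
    |∑' n, V n * ψ n ^ 2 - E * ∑' n, ψ n ^ 2| ≤
      2 * ∑' n, ψ n ^ 2 + |∑' n, ψ n * (schrodingerAct V ψ n - E * ψ n)| := by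
  have hR := abs_tsum_mul_le_of_tsum_sq_le hψ (summable_sq_dirichletShift hψ)
    (tsum_sq_dirichletShift_le hψ)
  have hL := abs_tsum_mul_le_of_tsum_sq_le hψ (summable_sq_succ hψ) (tsum_sq_succ_le hψ)
  rw [tsum_mul_schrodingerAct_sub hψ (summable_sq_potential_mul hψ hφ)]
  generalize ∑' n, ψ n * dirichletShift ψ n = A at hR ⊢
  generalize ∑' n, ψ n * ψ (n + 1) = B at hL ⊢
  rw [abs_le] at hR hL ⊢
  constructor <;>
  linarith [le_abs_self (A + B + ∑' n, V n * ψ n ^ 2 - E * ∑' n, ψ n ^ 2),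
    neg_abs_le (A + B + ∑' n, V n * ψ n ^ 2 - E * ∑' n, ψ n ^ 2)]

end Residual

lemma exists_finset_eq_zero_or_le {V : ℕ → ℝ} {ns : ℕ → ℕ}
    (hsupp : ∀ n : ℕ, n ∉ Set.range ns → V n = 0)
    (hbig : Tendsto (fun k => V (ns k)) atTop atTop) (M : ℝ) :
    ∃ s : Finset ℕ, ∀ n ∉ s, V n = 0 ∨ M ≤ V n := by
  obtain ⟨K, hK⟩ := eventually_atTop.1 (hbig.eventually_ge_atTop M)
  refine ⟨(Finset.range K).image ns, fun n hn => ?_⟩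
  by_cases hrange : n ∈ Set.range ns
  · obtain ⟨k, rfl⟩ := hrange
    refine .inr (hK k (not_lt.1 fun hk => hn ?_))
    exact Finset.mem_image_of_mem ns (Finset.mem_range.2 hk)
  · exact .inl (hsupp n hrange)

lemma tsum_mul_sq_le_sum_add {V ψ : α → ℝ} {M : ℝ} (hM : 0 < M) {s : Finset α}
    (hs : ∀ n ∉ s, V n = 0 ∨ M ≤ V n) (hψ : Summable fun n => ψ n ^ 2)
    (hVψ : Summable fun n => (V n * ψ n) ^ 2) :
    ∑' n, V n * ψ n ^ 2 ≤ ∑ n ∈ s, V n * ψ n ^ 2 + (∑' n, (V n * ψ n) ^ 2) / M := by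
  have hV := summable_mul_sq hψ hVψ
  have hout : ∀ n ∉ s, V n * ψ n ^ 2 ≤ (V n * ψ n) ^ 2 / M := by
    intro n hn
    rw [le_div_iff₀ hM]
    rcases hs n hn with h | h
    · simp [h]
    · have hVn : 0 ≤ V n * ψ n ^ 2 := mul_nonneg (hM.le.trans h) (sq_nonneg _)
      nlinarith [mul_le_mul_of_nonneg_left h hVn]
  rw [← hV.sum_add_tsum_compl (s := s), ← tsum_div_const]
  gcongr
  calc ∑' n : ↑(s : Set α)ᶜ, V n * ψ n ^ 2 ≤ ∑' n : ↑(s : Set α)ᶜ, (V n * ψ n) ^ 2 / M :=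
        (hV.subtype _).tsum_le_tsum (fun n => hout n n.2) ((hVψ.div_const M).subtype _)
    _ ≤ ∑' n, (V n * ψ n) ^ 2 / M :=
        Summable.tsum_subtype_le _ _ (fun n => by positivity) (hVψ.div_const M)

lemma tendsto_tsum_mul_sq_zero {ι : Type*} {l : Filter ι} {V : α → ℝ}
    (hV : ∀ M, ∃ s : Finset α, ∀ n ∉ s, V n = 0 ∨ M ≤ V n) {ψ : ι → α → ℝ}
    (hψ : ∀ k, Summable fun n => ψ k n ^ 2) (hVψ : ∀ k, Summable fun n => (V n * ψ k n) ^ 2)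
    (hcoord : ∀ m, Tendsto (fun k => ψ k m ^ 2) l (𝓝 0)) {C : ℝ}
    (hC : ∀ᶠ k in l, ∑' n, (V n * ψ k n) ^ 2 ≤ C) :
    Tendsto (fun k => ∑' n, V n * ψ k n ^ 2) l (𝓝 0) := by
  have hfinite (s : Finset α) : Tendsto (fun k => ∑ n ∈ s, V n * ψ k n ^ 2) l (𝓝 0) := by
    simpa using tendsto_finsetSum s fun n _ => (hcoord n).const_mul (V n)
  refine tendsto_order.2 ⟨fun a ha => ?_, fun a ha => ?_⟩
  · obtain ⟨s, hs⟩ := hV 0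
    filter_upwards [(hfinite s).eventually (lt_mem_nhds ha)] with k hk
    refine hk.trans_le (Summable.sum_le_tsum s (fun n hn => ?_) (summable_mul_sq (hψ k) (hVψ k)))
    exact mul_nonneg ((hs n hn).elim ge_of_eq id) (sq_nonneg _)
  · obtain ⟨M, hMC, hM⟩ := (((tendsto_const_nhds (x := C)).div_atTop tendsto_id).eventually
      (gt_mem_nhds (half_pos ha)) |>.and (eventually_gt_atTop 0)).exists
    obtain ⟨s, hs⟩ := hV M
    filter_upwards [(hfinite s).eventually (gt_mem_nhds (half_pos ha)), hC] with k hk hCk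
    calc ∑' n, V n * ψ k n ^ 2
        ≤ ∑ n ∈ s, V n * ψ k n ^ 2 + (∑' n, (V n * ψ k n) ^ 2) / M :=
          tsum_mul_sq_le_sum_add hM hs (hψ k) (hVψ k)
      _ ≤ ∑ n ∈ s, V n * ψ k n ^ 2 + C / M := by gcongr
      _ < a := by simp only [id] at hMC; linarith

theorem stmt_12_general (V : ℕ → ℝ) (ns : ℕ → ℕ)
    (hsupp : ∀ n : ℕ, n ∉ Set.range ns → V n = 0)
    (hbig : Tendsto (fun k => V (ns k)) atTop atTop) :
    ∀ E : ℝ, E ∉ Set.Icc (-2 : ℝ) 2 → ¬ IsWeylPoint V E := by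
  rintro E hE ⟨ψ, -, hψ, hφ, horth, hφ0⟩
  have hnorm (k : ℕ) : ∑' n, ψ k n ^ 2 = 1 := by simpa [sq] using horth k k
  have hVψ (k : ℕ) := summable_sq_potential_mul (hψ k) (hφ k)
  have hbounded : ∀ᶠ k in atTop, ∑' n, (V n * ψ k n) ^ 2 ≤ 4 * (1 + (2 + E ^ 2)) := by
    filter_upwards [hφ0.eventually (ge_mem_nhds one_pos)] with k hk
    grw [tsum_sq_potential_mul_le (hψ k) (hφ k), hk, hnorm k, mul_one]
  have hq : Tendsto (fun k => ∑' n, V n * ψ k n ^ 2) atTop (𝓝 0) :=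
    tendsto_tsum_mul_sq_zero (exists_finset_eq_zero_or_le hsupp hbig) hψ hVψ
      (fun m => (summable_sq_apply_of_orthonormal hψ horth m).tendsto_atTop_zero) hbounded
  have hinner : Tendsto (fun k => ∑' n, ψ k n * (schrodingerAct V (ψ k) n - E * ψ k n))
      atTop (𝓝 0) := by
    refine squeeze_zero_norm (fun k => Real.abs_le_sqrt ?_) (by simpa using hφ0.sqrt)
    simpa [hnorm k] using tsum_mul_sq_le_sq_mul_sq (hψ k) (hφ k)
  have hE2 : |0 - E| ≤ 2 + |0| :=
    le_of_tendsto_of_tendsto' ((hq.sub_const E).abs) (hinner.abs.const_add 2)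
      (fun k => by simpa [hnorm k] using abs_tsum_mul_sq_sub_le (hψ k) (hφ k))
  exact hE (abs_le.1 (by simpa using hE2))

theorem stmt_12 (V : ℕ → ℝ) (ns : ℕ → ℕ)
    (hmono : StrictMono ns)
    (hgap : Tendsto (fun k => ns (k + 1) - ns k) atTop atTop)
    (hsupp : ∀ n : ℕ, n ∉ Set.range ns → V n = 0)
    (hbig : Tendsto (fun k => V (ns k)) atTop atTop) :
    ∀ E : ℝ, E ∉ Set.Icc (-2 : ℝ) 2 → ¬ IsWeylPoint V E :=
  stmt_12_general V ns hsupp hbig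
end
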